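/- arXiv:2302.05652 — 7 statements merged into one kernel-verified Lean document; each statement's English description precedes it below -/
import Mathlib

section
/- A graph G on n vertices is distance magic if and only if the set of integers p ≥ 1 for which G is p-distance magic is infinite. -/
/-!
A distance magic labeling reduced modulo `p` is `p`-distance magic for every `p`.
Conversely, once `p > n²` the multiset `{1,…,n}_p` is `{1,…,n}` itself and every weight is
smaller than `p`, so weights that agree modulo `p` are equal.
-/

open Finset

/-- A graph `G` on `n` vertices is distance magic: there is a bijection assigning the
labels `1,…,n` (here `v ↦ f v + 1`) so that all vertex weights equal a constant. -/
def IsDistanceMagic {n : ℕ} (G : SimpleGraph (Fin n)) [DecidableRel G.Adj] : Prop :=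
  ∃ f : Fin n ≃ Fin n, ∃ k : ℕ, ∀ v, ∑ u ∈ G.neighborFinset v, ((f u : ℕ) + 1) = k

/-- A graph `G` on `n` vertices is `p`-distance magic: there is a labeling whose multiset
of values is `{1,2,…,n}_p` (the reductions of `1,…,n` modulo `p`, with `0` replaced by `p`,
i.e. the multiset `{(i % p) + 1 : i ∈ range n}`) such that all vertex weights are congruent
to one common value modulo `p`. -/
def IsPDistanceMagic {n : ℕ} (G : SimpleGraph (Fin n)) [DecidableRel G.Adj] (p : ℕ) : Prop :=
  ∃ f : Fin n → ℕ,
    Multiset.map f Finset.univ.val = (Multiset.range n).map (fun i => i % p + 1) ∧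
    ∃ μ : ℕ, ∀ v, (∑ u ∈ G.neighborFinset v, f u) % p = μ % p

lemma Fin.univ_val_map_val (n : ℕ) :
    (Finset.univ : Finset (Fin n)).val.map Fin.val = Multiset.range n := by
  have h := congr_arg Finset.val (Fin.map_valEmbedding_univ (n := n))
  rwa [Finset.map_val, Nat.Iio_eq_range] at h

lemma Multiset.map_mod_add_one_range_of_le {n p : ℕ} (h : n ≤ p) :
    (Multiset.range n).map (fun i => i % p + 1) = (Multiset.range n).map (· + 1) :=
  Multiset.map_congr rfl fun i hi => by
    rw [Nat.mod_eq_of_lt ((Multiset.mem_range.1 hi).trans_le h)]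

lemma exists_equiv_of_map_univ_eq_range {n : ℕ} {f : Fin n → ℕ}
    (hf : (Finset.univ : Finset (Fin n)).val.map f = Multiset.range n) :
    ∃ e : Fin n ≃ Fin n, ∀ v, (e v : ℕ) = f v := by
  have hlt : ∀ v, f v < n := fun v =>
    Multiset.mem_range.1 (hf ▸ Multiset.mem_map_of_mem f (Finset.mem_univ v))
  have hinj : Function.Injective f := fun a b hab =>
    Multiset.inj_on_of_nodup_map (hf ▸ Multiset.nodup_range n) a (Finset.mem_univ a) b
      (Finset.mem_univ b) hab
  let g : Fin n → Fin n := fun v => ⟨f v, hlt v⟩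
  have hg : Function.Injective g := fun a b hab => hinj (congr_arg Fin.val hab)
  exact ⟨Equiv.ofBijective g (Finite.injective_iff_bijective.1 hg), fun v => rfl⟩

section

variable {n : ℕ} {G : SimpleGraph (Fin n)} [DecidableRel G.Adj]

theorem IsDistanceMagic.isPDistanceMagic (h : IsDistanceMagic G) (p : ℕ) :
    IsPDistanceMagic G p := by
  obtain ⟨f, k, hk⟩ := h
  refine ⟨fun v => (f v : ℕ) % p + 1, ?_, k, fun v => ?_⟩
  · have : (fun v => (f v : ℕ) % p + 1) = (fun i => i % p + 1) ∘ Fin.val ∘ f := rfl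
    rw [this, ← Multiset.map_map, ← Multiset.map_map, Multiset.map_univ_val_equiv,
      Fin.univ_val_map_val]
  · rw [← hk v]
    exact Nat.ModEq.sum fun u _ => (Nat.mod_modEq _ p).add_right 1

lemma sum_neighborFinset_le_mul_self {f : Fin n → ℕ} (hf : ∀ v, f v ≤ n) (v : Fin n) :
    ∑ u ∈ G.neighborFinset v, f u ≤ n * n :=
  calc ∑ u ∈ G.neighborFinset v, f u ≤ (G.neighborFinset v).card * n :=
        Finset.sum_le_card_nsmul _ _ _ fun u _ => hf u
    _ ≤ n * n := by
        gcongr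
        simpa using Finset.card_le_univ (G.neighborFinset v)

theorem IsPDistanceMagic.isDistanceMagic {p : ℕ} (h : IsPDistanceMagic G p) (hp : n * n < p) :
    IsDistanceMagic G := by
  obtain ⟨f, hf, μ, hμ⟩ := h
  rw [Multiset.map_mod_add_one_range_of_le (by nlinarith)] at hf
  have hbounds : ∀ v, 1 ≤ f v ∧ f v ≤ n := fun v => by
    obtain ⟨i, hi, hiv⟩ :=
      Multiset.mem_map.1 (hf ▸ Multiset.mem_map_of_mem f (Finset.mem_univ v))
    have := Multiset.mem_range.1 hi
    omega
  obtain ⟨e, he⟩ := exists_equiv_of_map_univ_eq_range (f := fun v => f v - 1) (by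
    change Multiset.map ((· - 1) ∘ f) _ = _
    rw [← Multiset.map_map, hf, Multiset.map_map]
    simp)
  refine ⟨e, μ % p, fun v => ?_⟩
  have hlabel : ∀ u, (e u : ℕ) + 1 = f u := fun u => by have := hbounds u; rw [he]; omega
  simp only [hlabel]
  have hweight := (sum_neighborFinset_le_mul_self (G := G) (fun u => (hbounds u).2) v).trans_lt hp
  rw [← hμ v, Nat.mod_eq_of_lt hweight]

end

/-- A graph `G` is distance magic if and only if the set of integers
`p ≥ 1` for which `G` is `p`-distance magic is infinite. -/
theorem distance_magic_iff_infinitely_many_p {n : ℕ} (G : SimpleGraph (Fin n))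
    [DecidableRel G.Adj] :
    IsDistanceMagic G ↔ {p : ℕ | 1 ≤ p ∧ IsPDistanceMagic G p}.Infinite := by
  constructor
  · intro h
    exact (Set.Ici_infinite 1).mono fun p hp => ⟨hp, h.isPDistanceMagic p⟩
  · intro h
    obtain ⟨p, ⟨-, hp⟩, hlt⟩ := h.exists_gt (n * n)
    exact hp.isDistanceMagic hlt
end

section
/- A graph G on n vertices is distance magic if and only if G is p-distance magic for every prime number p. -/
open Finset

/-!
Reducing the labels of a distance magic labelling modulo `p` gives a `p`-distance magic one,
for every `p`. Conversely, take a prime `p > n²`. Then `{1,…,n}_p = {1,…,n}`, so a `p`-distance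
magic labelling is a bijection onto `{1,…,n}`; every weight is at most `n · n < p`, so weights
that agree modulo `p` are equal.
-/

namespace Multiset

theorem map_univ_val_comp_equiv_fin {α β : Type*} [Fintype α] {n : ℕ} (e : α ≃ Fin n)
    (s : ℕ → β) : univ.val.map (fun a => s (e a)) = (range n).map s := by
  have hval : univ.val.map (Fin.val : Fin n → ℕ) = range n := by
    rw [Fin.univ_val_map, List.ofFn_eq_map, List.map_coe_finRange_eq_range, coe_range]
  rw [← hval, map_map, ← map_univ_val_equiv e, map_map]
  rfl

theorem exists_equiv_fin_of_map_univ_val_eq_map_range {α β : Type*} [Fintype α] {n : ℕ}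
    {g : α → β} {s : ℕ → β} (hs : Function.Injective s)
    (h : univ.val.map g = (range n).map s) : ∃ e : α ≃ Fin n, ∀ a, g a = s (e a) := by
  have hmem (a : α) : ∃ i < n, s i = g a := by
    have hga := mem_map_of_mem g (mem_univ_val a)
    rw [h, mem_map] at hga
    simpa only [mem_range] using hga
  choose i hin hi using hmem
  have hg : Function.Injective g := by
    have hnd : (univ.val.map g).Nodup := h ▸ (nodup_range n).map hs
    exact fun a b hab => inj_on_of_nodup_map hnd a (mem_univ_val a) b (mem_univ_val b) hab
  have hcard : Fintype.card α = n := by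
    simpa using congrArg card h
  let φ : α → Fin n := fun a => ⟨i a, hin a⟩
  have hφ : Function.Injective φ := fun a b hab => hg <| by
    rw [← hi a, ← hi b]
    exact congrArg (s ∘ Fin.val) hab
  have hφ_bij : Function.Bijective φ :=
    (Fintype.bijective_iff_injective_and_card φ).2 ⟨hφ, by simp [hcard]⟩
  exact ⟨Equiv.ofBijective φ hφ_bij, fun a => (hi a).symm⟩

theorem map_range_mod_add_one_of_le {n p : ℕ} (h : n ≤ p) :
    (range n).map (fun i => i % p + 1) = (range n).map (· + 1) :=
  map_congr rfl fun i hi => by rw [Nat.mod_eq_of_lt ((mem_range.mp hi).trans_le h)]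

end Multiset

theorem SimpleGraph.sum_neighborFinset_le {V : Type*} [Fintype V] (G : SimpleGraph V)
    [DecidableRel G.Adj] {f : V → ℕ} {b : ℕ} (hf : ∀ u, f u ≤ b) (v : V) :
    ∑ u ∈ G.neighborFinset v, f u ≤ Fintype.card V * b :=
  calc ∑ u ∈ G.neighborFinset v, f u ≤ (G.neighborFinset v).card * b :=
        sum_le_card_nsmul _ _ _ fun u _ => hf u
    _ ≤ Fintype.card V * b := Nat.mul_le_mul_right b (card_le_univ _)

/-- A graph `G` on `n` vertices is distance magic if and only if it is
`p`-distance magic for every prime number `p`. -/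
theorem distance_magic_iff_all_primes {n : ℕ} (G : SimpleGraph (Fin n)) [DecidableRel G.Adj] :
    IsDistanceMagic G ↔ ∀ p : ℕ, p.Prime → IsPDistanceMagic G p := by
  refine ⟨fun h p _ => h.isPDistanceMagic p, fun h => ?_⟩
  obtain ⟨p, hp, hprime⟩ := Nat.exists_infinite_primes (n * n + 1)
  exact (h p hprime).isDistanceMagic hp
end

section
/- Let G be a graph on n vertices admitting a 2-distance magic labeling f with magic constant 0 (i.e., every vertex weight is even). Let V₁ = {v ∈ V(G) : f(v) = 1} and let G₁ be the subgraph of G induced on V₁. Then every vertex of G₁ has even degree in G₁ (so every component of G₁ is Eulerian). -/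
/-! All labels are `1` or `2`, so the parity of a vertex weight is the parity of the number of
neighbours labelled `1`. -/

open Finset

lemma mem_Icc_of_map_eq_map_range_mod {α : Type*} [Fintype α] {p n : ℕ} (hp : 0 < p)
    {f : α → ℕ} (hf : Multiset.map f univ.val = (Multiset.range n).map (fun i => i % p + 1))
    (u : α) : f u ∈ Icc 1 p := by
  have hu : f u ∈ Multiset.map f univ.val := Multiset.mem_map_of_mem f (mem_univ u)
  rw [hf] at hu
  obtain ⟨i, -, hi⟩ := Multiset.mem_map.mp hu
  have := Nat.mod_lt i hp
  rw [mem_Icc]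
  omega

/-- Let `G` admit a `2`-distance magic labeling `f` (a labeling with
value multiset `{1,2,…,n}₂`, i.e. `{(i % 2) + 1 : i ∈ range n}`) with magic constant `0`,
i.e. every vertex weight is even. Then every vertex of the subgraph `G₁` induced on
`V₁ = {v : f v = 1}` has even degree in `G₁` (so every component of `G₁` is Eulerian). -/
theorem two_magic_constant_zero_induced_even_degrees {n : ℕ} (G : SimpleGraph (Fin n))
    [DecidableRel G.Adj] (f : Fin n → ℕ)
    (hmul : Multiset.map f Finset.univ.val = (Multiset.range n).map (fun i => i % 2 + 1))
    (hmagic : ∀ v, (∑ u ∈ G.neighborFinset v, f u) % 2 = 0) :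
    ∀ v, f v = 1 → Even ((G.neighborFinset v).filter (fun u => f u = 1)).card := by
  have hodd : ∀ u, Odd (f u) ↔ f u = 1 := fun u => by
    obtain ⟨h1, h2⟩ := mem_Icc.mp (mem_Icc_of_map_eq_map_range_mod two_pos hmul u)
    interval_cases f u <;> decide
  intro v _
  simpa only [hodd] using (even_sum_iff_even_card_odd f).mp (Nat.even_iff.mpr (hmagic v))
end

section
/- Let G be a graph on n vertices admitting a 2-distance magic labeling f with magic constant 1 (i.e., every vertex weight is odd). Let V₁ = {v ∈ V(G) : f(v) = 1} and let G₁ be the subgraph of G induced on V₁. Then every vertex of G₁ has odd degree in G₁; in particular G₁ has no isolated vertices, and hence G₁ contains a nonempty matching provided V₁ is nonempty. -/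
open Finset

/-! A vertex labelled `2` contributes nothing to the parity of a weight, so the weight of `v` has
the parity of the number of neighbours of `v` labelled `1`. Odd weights therefore make every
vertex, in particular every vertex of `V₁`, have an odd (hence positive) number of neighbours
in `V₁`. -/

theorem eq_one_or_eq_two_of_map_univ_eq {α : Type*} [Fintype α] {n : ℕ} {f : α → ℕ}
    (hmul : Multiset.map f univ.val = (Multiset.range n).map (fun i => i % 2 + 1)) (a : α) :
    f a = 1 ∨ f a = 2 := by
  have ha : f a ∈ (Multiset.range n).map (fun i => i % 2 + 1) :=
    hmul ▸ Multiset.mem_map_of_mem f (mem_univ a)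
  obtain ⟨i, -, hi⟩ := Multiset.mem_map.mp ha
  omega

theorem odd_sum_iff_odd_card_eq_one {ι : Type*} {s : Finset ι} {f : ι → ℕ}
    (hf : ∀ i ∈ s, f i = 1 ∨ f i = 2) :
    Odd (∑ i ∈ s, f i) ↔ Odd #{i ∈ s | f i = 1} := by
  have hodd : ∀ i ∈ s, Odd (f i) ↔ f i = 1 := fun i hi => by
    rcases hf i hi with h | h <;> simp [h]
  rw [odd_sum_iff_odd_card_odd, filter_congr hodd]

/-- Let `G` admit a `2`-distance magic labeling `f` (a labeling with
value multiset `{1,2,…,n}₂`, i.e. `{(i % 2) + 1 : i ∈ range n}`) with magic constant `1`,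
i.e. every vertex weight is odd. Then every vertex of the subgraph `G₁` induced on
`V₁ = {v : f v = 1}` has odd degree in `G₁`; in particular `G₁` has no isolated vertices,
and hence `G₁` contains a nonempty matching (an edge inside `V₁`) provided `V₁ ≠ ∅`. -/
theorem two_magic_constant_one_induced_odd_degrees {n : ℕ} (G : SimpleGraph (Fin n))
    [DecidableRel G.Adj] (f : Fin n → ℕ)
    (hmul : Multiset.map f Finset.univ.val = (Multiset.range n).map (fun i => i % 2 + 1))
    (hmagic : ∀ v, (∑ u ∈ G.neighborFinset v, f u) % 2 = 1) :
    (∀ v, f v = 1 → Odd ((G.neighborFinset v).filter (fun u => f u = 1)).card) ∧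
    ((∃ v, f v = 1) → ∃ u v, G.Adj u v ∧ f u = 1 ∧ f v = 1) := by
  have hodd : ∀ v, Odd #{u ∈ G.neighborFinset v | f u = 1} := fun v =>
    (odd_sum_iff_odd_card_eq_one fun u _ => eq_one_or_eq_two_of_map_univ_eq hmul u).mp
      (Nat.odd_iff.mpr (hmagic v))
  refine ⟨fun v _ => hodd v, fun ⟨v, hv⟩ => ?_⟩
  obtain ⟨u, hu⟩ := card_pos.mp (hodd v).pos
  rw [mem_filter, SimpleGraph.mem_neighborFinset] at hu
  exact ⟨v, u, hu.1, hv, hu.2⟩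
end

section
/- Let G be a graph on n vertices and p ≥ 1 an integer such that n(n+1)/2 is a unit in the ring ℤ_p (i.e., gcd(n(n+1)/2, p) = 1). If f and g are p-distance magic labelings of G with magic constants k and l respectively, then k ≡ l (mod p); that is, the p-magic constant of G is unique. -/
/-!
Since the adjacency matrix is symmetric, `∑ v, g v * w_f v = ∑ v, f v * w_g v`, where `w_f`, `w_g`
are the weights. Modulo `p` the left side is `(∑ g) * k` and the right side `(∑ f) * l`, and both
label sums are `1 + 2 + ⋯ + n = n(n+1)/2`, a unit in `ZMod p`, so `k = l` in `ZMod p`.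
-/

open Finset Matrix

namespace SimpleGraph

variable {V R : Type*} [Fintype V] (G : SimpleGraph V) [DecidableRel G.Adj] [CommSemiring R]

theorem sum_mul_sum_neighborFinset_comm (f g : V → R) :
    ∑ v, g v * ∑ u ∈ G.neighborFinset v, f u = ∑ v, f v * ∑ u ∈ G.neighborFinset v, g u := by
  simp only [← adjMatrix_mulVec_apply]
  change g ⬝ᵥ G.adjMatrix R *ᵥ f = f ⬝ᵥ G.adjMatrix R *ᵥ g
  rw [Matrix.dotProduct_mulVec, dotProduct_comm, ← Matrix.mulVec_transpose, transpose_adjMatrix]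

theorem sum_mul_eq_sum_mul_of_sum_neighborFinset_eq {f g : V → R} {k l : R}
    (hf : ∀ v, ∑ u ∈ G.neighborFinset v, f u = k) (hg : ∀ v, ∑ u ∈ G.neighborFinset v, g u = l) :
    (∑ v, g v) * k = (∑ v, f v) * l := by
  simpa only [hf, hg, ← sum_mul] using G.sum_mul_sum_neighborFinset_comm f g

end SimpleGraph

theorem Finset.sum_range_add_one (n : ℕ) : ∑ i ∈ range n, (i + 1) = n * (n + 1) / 2 := by
  have h := sum_range_succ' (fun i => i) n
  rw [add_zero] at h
  rw [← h, sum_range_id, Nat.add_sub_cancel, mul_comm]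

theorem ZMod.sum_natCast_eq_of_map_eq_range_mod {ι : Type*} [Fintype ι] {n p : ℕ} {f : ι → ℕ}
    (hf : univ.val.map f = (Multiset.range n).map (fun i => i % p + 1)) :
    ∑ i, (f i : ZMod p) = (n * (n + 1) / 2 : ℕ) := by
  have hsum : ∑ i, f i = ∑ i ∈ range n, (i % p + 1) := congrArg Multiset.sum hf
  rw [← Nat.cast_sum, hsum, ← sum_range_add_one]
  push_cast
  simp only [ZMod.natCast_mod]

theorem p_magic_constant_unique_general {n p : ℕ}
    (hunit : Nat.Coprime (n * (n + 1) / 2) p)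
    (G : SimpleGraph (Fin n)) [DecidableRel G.Adj]
    (f g : Fin n → ℕ) (k l : ℕ)
    (hfmul : Multiset.map f Finset.univ.val = (Multiset.range n).map (fun i => i % p + 1))
    (hfmagic : ∀ v, (∑ u ∈ G.neighborFinset v, f u) % p = k % p)
    (hgmul : Multiset.map g Finset.univ.val = (Multiset.range n).map (fun i => i % p + 1))
    (hgmagic : ∀ v, (∑ u ∈ G.neighborFinset v, g u) % p = l % p) :
    k % p = l % p := by
  have hf (v) : ∑ u ∈ G.neighborFinset v, (f u : ZMod p) = k := by
    exact_mod_cast (ZMod.natCast_eq_natCast_iff' _ _ _).mpr (hfmagic v)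
  have hg (v) : ∑ u ∈ G.neighborFinset v, (g u : ZMod p) = l := by
    exact_mod_cast (ZMod.natCast_eq_natCast_iff' _ _ _).mpr (hgmagic v)
  have key := G.sum_mul_eq_sum_mul_of_sum_neighborFinset_eq hf hg
  rw [ZMod.sum_natCast_eq_of_map_eq_range_mod hfmul,
    ZMod.sum_natCast_eq_of_map_eq_range_mod hgmul] at key
  exact (ZMod.natCast_eq_natCast_iff' _ _ _).mp
    (((ZMod.isUnit_iff_coprime _ _).mpr hunit).mul_left_cancel key)

/-- Let `G` be a graph on `n` vertices and `p ≥ 1` with `n(n+1)/2` a unit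
in `ℤ_p`, i.e. `gcd(n(n+1)/2, p) = 1`. If `f` and `g` are `p`-distance magic labelings of
`G` (value multiset `{1,2,…,n}_p`, i.e. `{(i % p) + 1 : i ∈ range n}`) with magic constants
`k` and `l` respectively, then `k ≡ l (mod p)`: the `p`-magic constant is unique. -/
theorem p_magic_constant_unique {n p : ℕ} (hp : 1 ≤ p)
    (hunit : Nat.Coprime (n * (n + 1) / 2) p)
    (G : SimpleGraph (Fin n)) [DecidableRel G.Adj]
    (f g : Fin n → ℕ) (k l : ℕ)
    (hfmul : Multiset.map f Finset.univ.val = (Multiset.range n).map (fun i => i % p + 1))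
    (hfmagic : ∀ v, (∑ u ∈ G.neighborFinset v, f u) % p = k % p)
    (hgmul : Multiset.map g Finset.univ.val = (Multiset.range n).map (fun i => i % p + 1))
    (hgmagic : ∀ v, (∑ u ∈ G.neighborFinset v, g u) % p = l % p) :
    k % p = l % p :=
  p_magic_constant_unique_general hunit G f g k l hfmul hfmagic hgmul hgmagic
end

section
/- Let G be a graph of order n ≥ 3 with n ≡ 1 (mod 4) or n ≡ 2 (mod 4). If f and g are 2-distance magic labelings of G with magic constants k and l respectively, then k ≡ l (mod 2); that is, the 2-magic constant of G is unique. -/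
/-!
Reduce all labels mod 2. If the weights of a labeling `f` are all `≡ k`, then
`k · Σ_v f(v) ≡ Σ_v f(v) w(v) = Σ_{u ~ v} f(u) f(v) ≡ 0 (mod 2)`, since every edge contributes
twice to the last sum. For `n ≡ 1, 2 (mod 4)` the label sum `n + ⌊n/2⌋` of `{1,…,n}₂` is odd, so
every magic constant is even.
-/

open Finset

namespace SimpleGraph

variable {V : Type*} [Fintype V] (G : SimpleGraph V) [DecidableRel G.Adj]

theorem sum_mul_sum_neighborFinset_eq_zero {R : Type*} [CommSemiring R] [CharP R 2] (x : V → R) :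
    ∑ v, x v * ∑ u ∈ G.neighborFinset v, x u = 0 := by
  simp_rw [mul_sum, neighborFinset_eq_filter, sum_filter]
  rw [← Fintype.sum_prod_type' (fun v u => if G.Adj v u then x v * x u else 0)]
  refine sum_ninvolution Prod.swap (fun p => ?_) (fun p hp hswap => ?_) (fun _ => mem_univ _)
    Prod.swap_swap
  · by_cases h : G.Adj p.1 p.2
    · simp [h, h.symm, mul_comm (x p.2), CharTwo.add_self_eq_zero]
    · simp [h, mt G.adj_symm h]
  · have hadj : G.Adj p.1 p.2 := by by_contra h; simp [h] at hp
    exact hadj.ne (congrArg Prod.fst hswap).symm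

theorem mod_two_eq_zero_of_weight_mod_two_eq {f : V → ℕ} {k : ℕ}
    (hmagic : ∀ v, (∑ u ∈ G.neighborFinset v, f u) % 2 = k % 2)
    (hsum : (∑ v, f v) % 2 = 1) : k % 2 = 0 := by
  have hweight : ∀ v, (∑ u ∈ G.neighborFinset v, (f u : ZMod 2)) = k := fun v => by
    rw [← Nat.cast_sum, ZMod.natCast_eq_natCast_iff', hmagic]
  have hk : ((∑ v, f v : ℕ) : ZMod 2) * k = 0 := by
    simpa [hweight, ← sum_mul] using G.sum_mul_sum_neighborFinset_eq_zero (fun v => (f v : ZMod 2))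
  rw [← ZMod.natCast_mod, hsum, Nat.cast_one, one_mul, ZMod.natCast_eq_zero_iff] at hk
  omega

end SimpleGraph

theorem sum_range_mod_two_add_one (n : ℕ) : ∑ i ∈ range n, (i % 2 + 1) = n + n / 2 := by
  induction n with
  | zero => rfl
  | succ n ih => rw [sum_range_succ, ih]; omega

theorem sum_eq_add_div_two_of_map_eq {n : ℕ} {V : Type*} [Fintype V] {f : V → ℕ}
    (hf : Multiset.map f univ.val = (Multiset.range n).map (fun i => i % 2 + 1)) :
    ∑ v, f v = n + n / 2 := by
  rw [← sum_range_mod_two_add_one, sum_eq_multiset_sum, hf]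
  rfl

theorem two_magic_constant_unique_general {n : ℕ}
    (hmod : n % 4 = 1 ∨ n % 4 = 2)
    (G : SimpleGraph (Fin n)) [DecidableRel G.Adj]
    (f g : Fin n → ℕ) (k l : ℕ)
    (hfmul : Multiset.map f Finset.univ.val = (Multiset.range n).map (fun i => i % 2 + 1))
    (hfmagic : ∀ v, (∑ u ∈ G.neighborFinset v, f u) % 2 = k % 2)
    (hgmul : Multiset.map g Finset.univ.val = (Multiset.range n).map (fun i => i % 2 + 1))
    (hgmagic : ∀ v, (∑ u ∈ G.neighborFinset v, g u) % 2 = l % 2) :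
    k % 2 = l % 2 := by
  have hodd : (n + n / 2) % 2 = 1 := by omega
  rw [G.mod_two_eq_zero_of_weight_mod_two_eq hfmagic (sum_eq_add_div_two_of_map_eq hfmul ▸ hodd),
    G.mod_two_eq_zero_of_weight_mod_two_eq hgmagic (sum_eq_add_div_two_of_map_eq hgmul ▸ hodd)]

/-- Let `G` be a graph of order `n ≥ 3` with `n ≡ 1 (mod 4)` or
`n ≡ 2 (mod 4)`. If `f` and `g` are `2`-distance magic labelings of `G` (value multiset
`{1,2,…,n}₂`, i.e. `{(i % 2) + 1 : i ∈ range n}`) with magic constants `k` and `l`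
respectively, then `k ≡ l (mod 2)`: the `2`-magic constant is unique. -/
theorem two_magic_constant_unique {n : ℕ} (hn : 3 ≤ n)
    (hmod : n % 4 = 1 ∨ n % 4 = 2)
    (G : SimpleGraph (Fin n)) [DecidableRel G.Adj]
    (f g : Fin n → ℕ) (k l : ℕ)
    (hfmul : Multiset.map f Finset.univ.val = (Multiset.range n).map (fun i => i % 2 + 1))
    (hfmagic : ∀ v, (∑ u ∈ G.neighborFinset v, f u) % 2 = k % 2)
    (hgmul : Multiset.map g Finset.univ.val = (Multiset.range n).map (fun i => i % 2 + 1))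
    (hgmagic : ∀ v, (∑ u ∈ G.neighborFinset v, g u) % 2 = l % 2) :
    k % 2 = l % 2 :=
  two_magic_constant_unique_general hmod G f g k l hfmul hfmagic hgmul hgmagic
end

section
/- Let G be a connected r-regular graph on n vertices with r even, with adjacency matrix A and Laplacian matrix L = rI − A. Let f : V(G) → {1,2,...,n} be a bijection and let x = (f(v₁),...,f(vₙ))ᵀ be the corresponding labeling vector. Then f is a distance magic labeling of G if and only if (L² + A²)x = r²x. -/
/-! The Laplacian of an `r`-regular graph is `L = r I - A`, so
`(L² + A²) x - r² x = 2 A (A x - r x)`: the matrix equation says exactly that the weight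
vector `A x` is an eigenvector of `A` for the eigenvalue `r`. For a connected graph this
eigenspace is the kernel of `L`, i.e. the constant vectors, and `A x` is constant exactly
when `f` is distance magic. -/

open Matrix

theorem Matrix.smul_one_sub_sq_add_sq_mulVec_eq_iff {n R : Type*} [Fintype n] [DecidableEq n]
    [Field R] [NeZero (2 : R)] (A : Matrix n n R) (c : R) (x : n → R) :
    ((c • 1 - A) ^ 2 + A ^ 2) *ᵥ x = c ^ 2 • x ↔ A *ᵥ (A *ᵥ x) = c • (A *ᵥ x) := by
  have hL : ∀ y, (c • 1 - A) *ᵥ y = c • y - A *ᵥ y := fun y => by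
    rw [sub_mulVec, smul_mulVec, one_mulVec]
  have hexpand : ((c • 1 - A) ^ 2 + A ^ 2) *ᵥ x
      = c ^ 2 • x + (2 : R) • (A *ᵥ (A *ᵥ x) - c • (A *ᵥ x)) := by
    rw [add_mulVec, sq, sq, ← mulVec_mulVec, ← mulVec_mulVec, hL, hL, mulVec_sub, mulVec_smul]
    module
  rw [hexpand, add_eq_left, smul_eq_zero, sub_eq_zero, or_iff_right two_ne_zero]

namespace SimpleGraph

variable {V : Type*} [Fintype V] [DecidableEq V] {G : SimpleGraph V} [DecidableRel G.Adj] {r : ℕ}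

theorem IsRegularOfDegree.lapMatrix_eq {R : Type*} [Ring R] (hreg : G.IsRegularOfDegree r) :
    G.lapMatrix R = (r : R) • (1 : Matrix V V R) - G.adjMatrix R := by
  have hdeg : ∀ v, G.degree v = r := fun v => hreg.degree_eq v
  simp only [lapMatrix, degMatrix, hdeg, smul_one_eq_diagonal]

theorem IsRegularOfDegree.adjMatrix_mulVec_eq_smul_iff (hreg : G.IsRegularOfDegree r)
    (hconn : G.Connected) {y : V → ℝ} :
    G.adjMatrix ℝ *ᵥ y = (r : ℝ) • y ↔ ∀ u v, y u = y v := by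
  have hlap : G.lapMatrix ℝ *ᵥ y = (r : ℝ) • y - G.adjMatrix ℝ *ᵥ y := by
    rw [hreg.lapMatrix_eq, sub_mulVec, smul_mulVec, one_mulVec]
  rw [eq_comm, ← sub_eq_zero, ← hlap, lapMatrix_mulVec_eq_zero_iff_forall_reachable]
  exact ⟨fun h u v => h u v (hconn.preconnected u v), fun h u v _ => h u v⟩

end SimpleGraph

theorem exists_forall_eq_const_iff {α β : Type*} [Nonempty α] {g : α → β} :
    (∃ k, ∀ a, g a = k) ↔ ∀ a b, g a = g b := by
  refine ⟨fun ⟨k, hk⟩ a b => (hk a).trans (hk b).symm, fun h => ?_⟩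
  obtain ⟨a₀⟩ := ‹Nonempty α›
  exact ⟨g a₀, fun a => h a a₀⟩

theorem distance_magic_iff_L2_A2_general {n r : ℕ} (G : SimpleGraph (Fin n))
    [DecidableRel G.Adj]
    (hconn : G.Connected) (hreg : G.IsRegularOfDegree r)
    (f : Fin n ≃ Fin n)
    (A L : Matrix (Fin n) (Fin n) ℝ)
    (hA : A = G.adjMatrix ℝ)
    (hL : L = (r : ℝ) • (1 : Matrix (Fin n) (Fin n) ℝ) - A)
    (x : Fin n → ℝ) (hx : x = fun v => ((f v : ℕ) + 1 : ℝ)) :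
    (∃ k : ℕ, ∀ v, ∑ u ∈ G.neighborFinset v, ((f u : ℕ) + 1) = k) ↔
    (L ^ 2 + A ^ 2) *ᵥ x = ((r : ℝ) ^ 2) • x := by
  subst hL
  have : Nonempty (Fin n) := hconn.nonempty
  have hweight : ∀ v, (A *ᵥ x) v = ((∑ u ∈ G.neighborFinset v, ((f u : ℕ) + 1) : ℕ) : ℝ) := by
    intro v
    simp [hA, hx, SimpleGraph.adjMatrix_mulVec_apply]
  rw [smul_one_sub_sq_add_sq_mulVec_eq_iff, hA, hreg.adjMatrix_mulVec_eq_smul_iff hconn, ← hA]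
  simp only [hweight, Nat.cast_inj]
  exact exists_forall_eq_const_iff

/-- Let `G` be a connected `r`-regular graph (`r` even) on `n` vertices
with adjacency matrix `A` and Laplacian `L = rI − A`. A bijective labeling `f` (labels
`v ↦ f v + 1` in `{1,…,n}`, labeling vector `x`) is a distance magic labeling of `G`
(all weights equal to some constant `k`) if and only if `(L² + A²)x = r²x`. -/
theorem distance_magic_iff_L2_A2 {n r : ℕ} (G : SimpleGraph (Fin n))
    [DecidableRel G.Adj]
    (hconn : G.Connected) (hreg : G.IsRegularOfDegree r) (hr : Even r)
    (f : Fin n ≃ Fin n)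
    (A L : Matrix (Fin n) (Fin n) ℝ)
    (hA : A = G.adjMatrix ℝ)
    (hL : L = (r : ℝ) • (1 : Matrix (Fin n) (Fin n) ℝ) - A)
    (x : Fin n → ℝ) (hx : x = fun v => ((f v : ℕ) + 1 : ℝ)) :
    (∃ k : ℕ, ∀ v, ∑ u ∈ G.neighborFinset v, ((f u : ℕ) + 1) = k) ↔
    (L ^ 2 + A ^ 2) *ᵥ x = ((r : ℝ) ^ 2) • x :=
  distance_magic_iff_L2_A2_general G hconn hreg f A L hA hL x hx
end
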